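/- arXiv:1404.4461 — 3 statements merged into one kernel-verified Lean document; each statement's English description precedes it below -/
import Mathlib

section
/- Neither 21 nor 28 is a perfect square; consequently, a rank-3 unimodular lattice cannot contain three vectors K, C₁, C₂ with K² = 7, K·C₁ = K·C₂ = 0, C₁² = C₂² = -2 and C₁·C₂ ∈ {0, 1}, such that they span the lattice rationally. -/
/-!
In coordinates, the Gram matrix of vectors `v` is `V G Vᵀ`, with `G` the Gram matrix of the
lattice, so for a unimodular lattice its determinant is `± det(V)²`. Since `K` is orthogonal to
`C₁` and `C₂`, the Gram determinant of `(K, C₁, C₂)` is `7 · (4 - (C₁·C₂)²)`, that is `28` or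
`21`, neither of which is a square.
-/

open Matrix

section Gram

variable {R M ι : Type*} [CommRing R] [AddCommGroup M] [Module R M]

def gramMatrix (B : M →ₗ[R] M →ₗ[R] R) (v : ι → M) : Matrix ι ι R :=
  of fun i j => B (v i) (v j)

theorem det_gramMatrix_fin_three_of_orthogonal {B : M →ₗ[R] M →ₗ[R] R}
    (hB : ∀ x y, B x y = B y x) {x y z : M} (hxy : B x y = 0) (hxz : B x z = 0) :
    (gramMatrix B ![x, y, z]).det = B x x * (B y y * B z z - B y z ^ 2) := by
  rw [det_fin_three]
  simp only [gramMatrix, of_apply, cons_val_zero, cons_val_one, cons_val_two, tail_cons,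
    head_cons, hB y x, hB z x, hB z y, hxy, hxz]
  ring

variable {n : Type*} [Fintype n] [DecidableEq n]

theorem gramMatrix_eq_mul_mul_transpose (B : (n → R) →ₗ[R] (n → R) →ₗ[R] R) (v : n → n → R) :
    gramMatrix B v = of v * gramMatrix B (Pi.single · 1) * (of v)ᵀ := by
  change _ = of v * LinearMap.toMatrix₂' R B * (of v)ᵀ
  rw [LinearMap.mul_toMatrix₂'_mul]
  ext i j
  simp [gramMatrix]

theorem det_gramMatrix (B : (n → R) →ₗ[R] (n → R) →ₗ[R] R) (v : n → n → R) :
    (gramMatrix B v).det = (of v).det ^ 2 * (gramMatrix B (Pi.single · 1)).det := by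
  rw [gramMatrix_eq_mul_mul_transpose, det_mul, det_mul, det_transpose]
  ring

theorem isSquare_abs_det_gramMatrix [LinearOrder R] [IsStrictOrderedRing R]
    (B : (n → R) →ₗ[R] (n → R) →ₗ[R] R)
    (hB : |(gramMatrix B (Pi.single · 1)).det| = 1) (v : n → n → R) :
    IsSquare |(gramMatrix B v).det| :=
  ⟨|(of v).det|, by rw [det_gramMatrix, abs_mul, hB, abs_pow, mul_one, sq]⟩

end Gram

/-- Neither `21` nor `28` is a perfect square; consequently a rank-3 unimodular lattice
(a free abelian group of rank 3 together with a symmetric bilinear form whose Gram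
matrix in the standard basis has determinant `±1`) cannot contain three vectors
`K, C₁, C₂` with `K² = 7`, `K·C₁ = K·C₂ = 0`, `C₁² = C₂² = -2`, `C₁·C₂ ∈ {0, 1}`
which span the lattice rationally (equivalently, which are `ℤ`-linearly independent). -/
theorem no_two_nodal_curves :
    ¬ IsSquare (21 : ℤ) ∧ ¬ IsSquare (28 : ℤ) ∧
    ∀ (B : (Fin 3 → ℤ) →ₗ[ℤ] (Fin 3 → ℤ) →ₗ[ℤ] ℤ),
      (∀ x y, B x y = B y x) →
      ((Matrix.of fun i j => B (Pi.single i 1) (Pi.single j 1)).det = 1 ∨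
        (Matrix.of fun i j => B (Pi.single i 1) (Pi.single j 1)).det = -1) →
      ∀ K C₁ C₂ : Fin 3 → ℤ,
        B K K = 7 → B K C₁ = 0 → B K C₂ = 0 →
        B C₁ C₁ = -2 → B C₂ C₂ = -2 → (B C₁ C₂ = 0 ∨ B C₁ C₂ = 1) →
        ¬ LinearIndependent ℤ ![K, C₁, C₂] := by
  refine ⟨by norm_num, by norm_num, ?_⟩
  intro B hB hdet K C₁ C₂ hKK hKC₁ hKC₂ hC₁ hC₂ hC₁C₂ _
  have hsq := isSquare_abs_det_gramMatrix B ((abs_eq zero_le_one).2 hdet) ![K, C₁, C₂]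
  rw [det_gramMatrix_fin_three_of_orthogonal hB hKC₁ hKC₂, hKK, hC₁, hC₂] at hsq
  rcases hC₁C₂ with h | h <;> norm_num [h] at hsq
end

section
/- If an involution α on a smooth minimal surface S of general type with p_g = 0 and K_S² = 7 has trace tr(α*) on H²(S,ℂ) equal to -1, 1 or 3, and the divisorial fixed part R satisfies R² = 2 - tr(α*), and R is numerically equivalent to a positive rational multiple of K_S whenever tr(α*) = -1, then R² = ±1. -/
/-- Otherwise `21 = (7r)²` would be a rational, hence an integral, square. -/
theorem seven_mul_sq_ne_three (r : ℚ) : 7 * r ^ 2 ≠ 3 := by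
  intro h
  have h21 : IsSquare ((21 : ℕ) : ℚ) := ⟨7 * r, by push_cast; linear_combination -7 * h⟩
  norm_num [Rat.isSquare_natCast_iff] at h21

/-- If an involution `α` on a smooth minimal surface of general type with `p_g = 0` and
`K² = 7` has trace `t = tr(α*) ∈ {-1, 1, 3}` on `H²(S,ℂ)`, the divisorial fixed part `R`
satisfies `R² = 2 - t`, and whenever `t = -1` the divisor `R` is numerically equivalent to a
positive rational multiple `r` of `K_S` (so that `R² = 7r²`), then `R² = ±1`. -/
theorem involution_fixed_part_square (t R2 : ℤ)
    (ht : t = -1 ∨ t = 1 ∨ t = 3)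
    (hR : R2 = 2 - t)
    (hneg : t = -1 → ∃ r : ℚ, 0 < r ∧ (R2 : ℚ) = 7 * r ^ 2) :
    R2 = 1 ∨ R2 = -1 := by
  subst hR
  rcases ht with rfl | rfl | rfl
  · obtain ⟨r, -, hr⟩ := hneg rfl
    exact absurd (by exact_mod_cast hr.symm) (seven_mul_sq_ne_three r)
  · exact Or.inl rfl
  · exact Or.inr rfl
end

section
/- In the Picard lattice of a smooth rational surface, if B₂ and B₃ are classes with B₂² = B₃² = -1, K·B₂ = K·B₃ = -1, and D = 2K + B₁ + B₂ + B₃ satisfies D² = 7, D·B₂ = 5, D·B₃ = 3, D·B₁ = 5, B₁ = F + Γ with Γ = 3K + B₁ + B₂ + B₃, then (B₂ - (-2K - Γ))² = 0 and D·(B₂ - (-2K - Γ)) = 0; by the Hodge index theorem (D nef and big) B₂ ≡ -2K - Γ numerically. -/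
/-!
With `Γ = M + K = 2K + D` one has `B₂ + 2K + Γ = 3D - 2B₁ - B₂ - 2B₃`, so the square of this
class and its product with `D` are determined by the given intersection numbers; both vanish,
and the Hodge index theorem for `D` turns this into the numerical equivalence.
-/

section IntersectionForm

variable {Div : Type*} [AddCommGroup Div] (inter : Div → Div → ℤ)
  (hadd : ∀ x y z, inter (x + y) z = inter x z + inter y z)
  (hsymm : ∀ x y, inter x y = inter y x)

def biadditiveOfSymm : Div →+ Div →+ ℤ :=
  AddMonoidHom.mk'
    (fun x => AddMonoidHom.mk' (inter x) fun y z => by rw [hsymm, hadd, hsymm y, hsymm z])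
    fun x y => by ext z; exact hadd x y z

end IntersectionForm

section Lattice

variable {Div : Type*} [AddCommGroup Div]

theorem sub_neg_two_smul_sub_eq {K Γ B1 B2 B3 D M : Div}
    (hD : D = 2 • K + B1 + B2 + B3) (hMdef : M = K + D) (hΓ : Γ = M + K) :
    B2 - (-(2 • K) - Γ) = 3 • D - 2 • B1 - B2 - 2 • B3 := by
  subst hΓ hMdef hD
  abel

theorem apply_three_smul_sub_eq_zero (f : Div →+ ℤ) {D B1 B2 B3 : Div}
    (hD2 : f D = 7) (hDB1 : f B1 = 5) (hDB2 : f B2 = 5) (hDB3 : f B3 = 3) :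
    f (3 • D - 2 • B1 - B2 - 2 • B3) = 0 := by
  simp only [map_sub, map_nsmul, hD2, hDB1, hDB2, hDB3]
  norm_num

theorem apply_three_smul_sub_self_eq_zero (B : Div →+ Div →+ ℤ) (hB : ∀ x y, B x y = B y x)
    {D B1 B2 B3 : Div} (hD2 : B D D = 7) (hDB1 : B D B1 = 5) (hDB2 : B D B2 = 5)
    (hDB3 : B D B3 = 3) (hB1sq : B B1 B1 = -1) (hB2sq : B B2 B2 = -1) (hB3sq : B B3 B3 = -1)
    (hB1B2 : B B1 B2 = 7) (hB1B3 : B B1 B3 = 5) (hB2B3 : B B2 B3 = 1) :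
    B (3 • D - 2 • B1 - B2 - 2 • B3) (3 • D - 2 • B1 - B2 - 2 • B3) = 0 := by
  simp only [map_sub, map_nsmul, AddMonoidHom.sub_apply, AddMonoidHom.nsmul_apply]
  rw [hB B1 D, hB B2 D, hB B3 D, hB B2 B1, hB B3 B1, hB B3 B2]
  simp only [hD2, hDB1, hDB2, hDB3, hB1sq, hB2sq, hB3sq, hB1B2, hB1B3, hB2B3]
  norm_num

end Lattice

theorem B2_numerically_equivalent_general (Div : Type*) [AddCommGroup Div]
    (inter : Div → Div → ℤ)
    (hadd : ∀ x y z, inter (x + y) z = inter x z + inter y z)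
    (hsymm : ∀ x y, inter x y = inter y x)
    (K Γ B1 B2 B3 D M : Div)
    (hD : D = 2 • K + B1 + B2 + B3)
    (hMdef : M = K + D)
    (hΓ : Γ = M + K)
    (hD2 : inter D D = 7)
    (hDB1 : inter D B1 = 5) (hDB2 : inter D B2 = 5) (hDB3 : inter D B3 = 3)
    (hB1sq : inter B1 B1 = -1) (hB2sq : inter B2 B2 = -1) (hB3sq : inter B3 B3 = -1)
    (hB1B2 : inter B1 B2 = 7) (hB1B3 : inter B1 B3 = 5) (hB2B3 : inter B2 B3 = 1)
    (NumEq : Div → Div → Prop)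
    -- Hodge index theorem for the nef and big class `D`:
    (hHI : ∀ x y : Div, inter D (x - y) = 0 → inter (x - y) (x - y) = 0 → NumEq x y) :
    inter (B2 - (-(2 • K) - Γ)) (B2 - (-(2 • K) - Γ)) = 0 ∧
    inter D (B2 - (-(2 • K) - Γ)) = 0 ∧
    NumEq B2 (-(2 • K) - Γ) := by
  let B := biadditiveOfSymm inter hadd hsymm
  have hsq : inter (B2 - (-(2 • K) - Γ)) (B2 - (-(2 • K) - Γ)) = 0 := by
    rw [sub_neg_two_smul_sub_eq hD hMdef hΓ]
    exact apply_three_smul_sub_self_eq_zero B hsymm hD2 hDB1 hDB2 hDB3 hB1sq hB2sq hB3sq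
      hB1B2 hB1B3 hB2B3
  have hdot : inter D (B2 - (-(2 • K) - Γ)) = 0 := by
    rw [sub_neg_two_smul_sub_eq hD hMdef hΓ]
    exact apply_three_smul_sub_eq_zero (B D) hD2 hDB1 hDB2 hDB3
  exact ⟨hsq, hdot, hHI _ _ hdot hsq⟩

/-- Lattice computation in the Picard lattice of a smooth rational surface: with
`D = 2K + B₁ + B₂ + B₃`, `M = K + D`, `Γ = M + K`, `B₁ = F + Γ`, and intersection numbers
`D² = 7`, `D·B₁ = D·B₂ = 5`, `D·B₃ = 3`, `B_i² = -1`, `B₁B₂ = 7`, `B₁B₃ = 5`, `B₂B₃ = 1`,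
one has `(B₂ - (-2K - Γ))² = 0` and `D·(B₂ - (-2K - Γ)) = 0`; the Hodge index theorem for
the nef and big class `D` then gives the numerical equivalence `B₂ ≡ -2K - Γ`. -/
theorem B2_numerically_equivalent (Div : Type*) [AddCommGroup Div]
    (inter : Div → Div → ℤ)
    (hadd : ∀ x y z, inter (x + y) z = inter x z + inter y z)
    (hsymm : ∀ x y, inter x y = inter y x)
    (K F Γ B1 B2 B3 D M : Div)
    (hD : D = 2 • K + B1 + B2 + B3)
    (hMdef : M = K + D)
    (hΓ : Γ = M + K)
    (hB1 : B1 = F + Γ)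
    (hD2 : inter D D = 7)
    (hDB1 : inter D B1 = 5) (hDB2 : inter D B2 = 5) (hDB3 : inter D B3 = 3)
    (hB1sq : inter B1 B1 = -1) (hB2sq : inter B2 B2 = -1) (hB3sq : inter B3 B3 = -1)
    (hB1B2 : inter B1 B2 = 7) (hB1B3 : inter B1 B3 = 5) (hB2B3 : inter B2 B3 = 1)
    (NumEq : Div → Div → Prop)
    -- Hodge index theorem for the nef and big class `D`:
    (hHI : ∀ x y : Div, inter D (x - y) = 0 → inter (x - y) (x - y) = 0 → NumEq x y) :
    inter (B2 - (-(2 • K) - Γ)) (B2 - (-(2 • K) - Γ)) = 0 ∧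
    inter D (B2 - (-(2 • K) - Γ)) = 0 ∧
    NumEq B2 (-(2 • K) - Γ) :=
  B2_numerically_equivalent_general Div inter hadd hsymm K Γ B1 B2 B3 D M hD hMdef hΓ hD2 hDB1 hDB2
    hDB3 hB1sq hB2sq hB3sq hB1B2 hB1B3 hB2B3 NumEq hHI
end
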